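/- For the map f(x,y) = (x², y², x³+y³+xy) with presentation matrix Λ_f as above, the determinant of Λ_f equals (up to sign) X₁²X₂² − 2X₁X₂Y² + Y⁴ − 2X₁⁴X₂ − 2X₁X₂⁴ − 8X₁²X₂²Y − 2X₁³Y² − 2X₂³Y² + X₁⁶ − 2X₁³X₂³ + X₂⁶, and substituting X₁ = x², X₂ = y², Y = x³+y³+xy makes this polynomial vanish identically in ℂ[x,y]. -/

import Mathlib

/-!
The determinant is a cofactor expansion along the last column, whose only nonzero entries
are `-1` and `Y`. For the vanishing: after `X₁ = x²`, `X₂ = y²`, the polynomial `P` is the norm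
of `Y - (x³ + y³ + xy)` under the sign changes `x ↦ ±x`, `y ↦ ±y`, i.e. the product of its
four conjugates; substituting `Y = x³ + y³ + xy` kills the trivial conjugate.
-/

open MvPolynomial

/-- The presentation matrix `Λ_f` for `f(x,y) = (x², y², x³+y³+xy)`,
over `ℂ[X₁,X₂,Y]` (variables `0 ↦ X₁`, `1 ↦ X₂`, `2 ↦ Y`). -/
noncomputable def LambdaF : Matrix (Fin 4) (Fin 4) (MvPolynomial (Fin 3) ℂ) :=
  !![X 2, -(X 0), -(X 1), -1;
     -(X 1 * X 2) - X 0 ^ 2, X 2 + X 0 * X 1, X 1 ^ 2 - X 0, 0;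
     -(X 1 ^ 2) - X 0 * X 2, -(X 1) + X 0 ^ 2, X 2 + X 0 * X 1, 0;
     -(X 0 * X 1), -(X 1 ^ 2), -(X 0 ^ 2), X 2]

/-- The polynomial generating the zeroth Fitting ideal of `f`. -/
noncomputable def PF : MvPolynomial (Fin 3) ℂ :=
  X 0 ^ 2 * X 1 ^ 2 - 2 * (X 0 * X 1 * X 2 ^ 2) + X 2 ^ 4 - 2 * (X 0 ^ 4 * X 1)
    - 2 * (X 0 * X 1 ^ 4) - 8 * (X 0 ^ 2 * X 1 ^ 2 * X 2) - 2 * (X 0 ^ 3 * X 2 ^ 2)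
    - 2 * (X 1 ^ 3 * X 2 ^ 2) + X 0 ^ 6 - 2 * (X 0 ^ 3 * X 1 ^ 3) + X 1 ^ 6

theorem det_LambdaF : LambdaF.det = PF := by
  rw [Matrix.det_succ_column _ 3]
  simp [Fin.sum_univ_four, Matrix.det_fin_three, LambdaF, PF, Fin.succAbove]
  ring

theorem aeval_sq_sq_PF {A : Type*} [CommRing A] [Algebra ℂ A] (x y z : A) :
    aeval ![x ^ 2, y ^ 2, z] PF =
      (z - (x ^ 3 + y ^ 3 + x * y)) * (z - (-x ^ 3 + y ^ 3 - x * y)) *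
        (z - (x ^ 3 - y ^ 3 - x * y)) * (z - (-x ^ 3 - y ^ 3 + x * y)) := by
  simp only [PF, map_add, map_sub, map_mul, map_pow, map_ofNat, aeval_X, Matrix.cons_val_zero,
    Matrix.cons_val_one, Matrix.cons_val_two, Matrix.head_cons, Matrix.tail_cons]
  ring

/-- `det Λ_f = ±P`, and substituting `X₁ = x²`, `X₂ = y²`, `Y = x³+y³+xy` makes
`P` vanish identically, i.e. `P` cuts out the image of `f`. -/
theorem detLambdaF :
    (LambdaF.det = PF ∨ LambdaF.det = -PF) ∧
    MvPolynomial.aeval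
      ![(X 0 : MvPolynomial (Fin 2) ℂ) ^ 2, X 1 ^ 2, X 0 ^ 3 + X 1 ^ 3 + X 0 * X 1] PF = 0 := by
  refine ⟨Or.inl det_LambdaF, ?_⟩
  rw [aeval_sq_sq_PF, sub_self, zero_mul, zero_mul, zero_mul]
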